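/- arXiv:1508.01914 — 3 statements merged into one kernel-verified Lean document; each statement's English description precedes it below -/
import Mathlib

section
/- Let 0 < γ₁ < 1, γ₂ < 0, and 0 < y₁ < y_α. Define ζ̂ on [y₁, y_α) by ζ̂(y) = (y₁/(γ₁-γ₂))·[ ((1-γ₂)/γ₁)(y/y₁)^{γ₁} - ((1-γ₁)/γ₂)(y/y₁)^{γ₂} ] and on [y_α, ∞) by ζ̂(y) = 1/λ + (α y_α/γ₂)(y/y_α)^{γ₂}. Then for all y in (y₁, ∞) with y ≠ y_α, the second derivative ζ̂''(y) < 0, i.e., ζ̂ is strictly concave on each piece. -/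
open Real Set Filter

private lemma hasDerivAt_div_rpow {c : ℝ} (p : ℝ) (hc : 0 < c) {y : ℝ} (hy : 0 < y) :
    HasDerivAt (fun y : ℝ => (y / c) ^ p) (p / c * (y / c) ^ (p - 1)) y := by
  have h1 : HasDerivAt (fun y : ℝ => y / c) (1 / c) y := by
    simpa using (hasDerivAt_id y).div_const c
  have h2 := (Real.hasDerivAt_rpow_const (x := y / c) (p := p)
    (Or.inl (div_pos hy hc).ne')).comp y h1
  rw [show p / c * (y / c) ^ (p - 1) = p * (y / c) ^ (p - 1) * (1 / c) by ring]
  exact h2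

theorem zetahat_concave_pieces
    (lam α γ₁ γ₂ y₁ yα : ℝ)
    (hlam : 0 < lam) (hα : α ∈ Set.Ioo (0 : ℝ) 1)
    (hγ₁ : 0 < γ₁) (hγ₁' : γ₁ < 1) (hγ₂ : γ₂ < 0)
    (hy₁ : 0 < y₁) (hy : y₁ < yα)
    (ζh : ℝ → ℝ)
    (hζh : ζh = fun y => if y < yα then
        (y₁ / (γ₁ - γ₂)) * (((1 - γ₂) / γ₁) * (y / y₁) ^ γ₁ - ((1 - γ₁) / γ₂) * (y / y₁) ^ γ₂)
      else 1 / lam + (α * yα / γ₂) * (y / yα) ^ γ₂) :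
    ∀ y : ℝ, y₁ < y → y ≠ yα → deriv (deriv ζh) y < 0 := by
  have hyα : 0 < yα := hy₁.trans hy
  obtain ⟨hα0, hα1⟩ := hα
  intro y hy' hne
  have hy0 : 0 < y := hy₁.trans hy'
  rcases lt_or_gt_of_ne hne with hlt | hgt
  · -- branch y < yα
    set f₁ : ℝ → ℝ := fun y =>
      (y₁ / (γ₁ - γ₂)) * (((1 - γ₂) / γ₁) * (y / y₁) ^ γ₁ -
        ((1 - γ₁) / γ₂) * (y / y₁) ^ γ₂) with hf₁
    set g₁ : ℝ → ℝ := fun y =>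
      (y₁ / (γ₁ - γ₂)) * (((1 - γ₂) / γ₁) * (γ₁ / y₁ * (y / y₁) ^ (γ₁ - 1)) -
        ((1 - γ₁) / γ₂) * (γ₂ / y₁ * (y / y₁) ^ (γ₂ - 1))) with hg₁
    have hEq : EqOn ζh f₁ (Iio yα) := fun z hz => by
      simp only [hζh]
      rw [if_pos (show z < yα from hz)]
    have hd1 : EqOn (deriv ζh) (deriv f₁) (Iio yα) := fun z hz =>
      (Filter.eventuallyEq_of_mem (isOpen_Iio.mem_nhds hz) hEq).deriv_eq
    have hf₁deriv : EqOn (deriv f₁) g₁ (Ioi (0 : ℝ)) := fun z hz => by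
      have h := (((hasDerivAt_div_rpow γ₁ hy₁ hz).const_mul ((1 - γ₂) / γ₁)).sub
        ((hasDerivAt_div_rpow γ₂ hy₁ hz).const_mul ((1 - γ₁) / γ₂))).const_mul
        (y₁ / (γ₁ - γ₂))
      exact h.deriv
    have hd2 : deriv (deriv ζh) y = deriv g₁ y := by
      rw [(Filter.eventuallyEq_of_mem (isOpen_Iio.mem_nhds hlt) hd1).deriv_eq,
        (Filter.eventuallyEq_of_mem (isOpen_Ioi.mem_nhds hy0) hf₁deriv).deriv_eq]
    have hG : HasDerivAt g₁
        ((y₁ / (γ₁ - γ₂)) * (((1 - γ₂) / γ₁) * (γ₁ / y₁ *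
            ((γ₁ - 1) / y₁ * (y / y₁) ^ (γ₁ - 1 - 1))) -
          ((1 - γ₁) / γ₂) * (γ₂ / y₁ * ((γ₂ - 1) / y₁ * (y / y₁) ^ (γ₂ - 1 - 1))))) y := by
      exact ((((hasDerivAt_div_rpow (γ₁ - 1) hy₁ hy0).const_mul (γ₁ / y₁)).const_mul
        ((1 - γ₂) / γ₁)).sub (((hasDerivAt_div_rpow (γ₂ - 1) hy₁ hy0).const_mul
        (γ₂ / y₁)).const_mul ((1 - γ₁) / γ₂))).const_mul (y₁ / (γ₁ - γ₂))
    rw [hd2, hG.deriv]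
    set X := (y / y₁) ^ (γ₁ - 1 - 1) with hX
    set Z := (y / y₁) ^ (γ₂ - 1 - 1) with hZ
    have hb : 1 < y / y₁ := (one_lt_div hy₁).mpr hy'
    have hZX : Z < X := Real.rpow_lt_rpow_of_exponent_lt hb (by linarith)
    have hkey : (y₁ / (γ₁ - γ₂)) * (((1 - γ₂) / γ₁) * (γ₁ / y₁ * ((γ₁ - 1) / y₁ * X)) -
        ((1 - γ₁) / γ₂) * (γ₂ / y₁ * ((γ₂ - 1) / y₁ * Z)))
        = ((1 - γ₁) * (1 - γ₂) / ((γ₁ - γ₂) * y₁)) * (Z - X) := by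
      have h1 : γ₁ ≠ 0 := ne_of_gt hγ₁
      have h2 : γ₂ ≠ 0 := ne_of_lt hγ₂
      have h3 : y₁ ≠ 0 := ne_of_gt hy₁
      have h4 : γ₁ - γ₂ ≠ 0 := ne_of_gt (by linarith)
      field_simp
      ring
    rw [hkey]
    apply mul_neg_of_pos_of_neg
    · apply div_pos (mul_pos (by linarith) (by linarith)) (mul_pos (by linarith) hy₁)
    · linarith
  · -- branch y > yα
    set f₂ : ℝ → ℝ := fun y => 1 / lam + (α * yα / γ₂) * (y / yα) ^ γ₂ with hf₂
    set g₂ : ℝ → ℝ := fun y => (α * yα / γ₂) * (γ₂ / yα * (y / yα) ^ (γ₂ - 1)) with hg₂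
    have hEq : EqOn ζh f₂ (Ioi yα) := fun z hz => by
      simp only [hζh]
      rw [if_neg (not_lt.mpr (le_of_lt hz))]
    have hd1 : EqOn (deriv ζh) (deriv f₂) (Ioi yα) := fun z hz =>
      (Filter.eventuallyEq_of_mem (isOpen_Ioi.mem_nhds hz) hEq).deriv_eq
    have hf₂deriv : EqOn (deriv f₂) g₂ (Ioi (0 : ℝ)) := fun z hz => by
      have h := (((hasDerivAt_div_rpow γ₂ hyα hz).const_mul (α * yα / γ₂)).const_add
        (1 / lam))
      exact h.deriv
    have hd2 : deriv (deriv ζh) y = deriv g₂ y := by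
      rw [(Filter.eventuallyEq_of_mem (isOpen_Ioi.mem_nhds hgt) hd1).deriv_eq,
        (Filter.eventuallyEq_of_mem (isOpen_Ioi.mem_nhds hy0) hf₂deriv).deriv_eq]
    have hG : HasDerivAt g₂
        ((α * yα / γ₂) * (γ₂ / yα * ((γ₂ - 1) / yα * (y / yα) ^ (γ₂ - 1 - 1)))) y :=
      (((hasDerivAt_div_rpow (γ₂ - 1) hyα hy0).const_mul (γ₂ / yα)).const_mul
        (α * yα / γ₂))
    rw [hd2, hG.deriv]
    set W := (y / yα) ^ (γ₂ - 1 - 1) with hW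
    have hWpos : 0 < W := Real.rpow_pos_of_pos (div_pos hy0 hyα) _
    have hkey : (α * yα / γ₂) * (γ₂ / yα * ((γ₂ - 1) / yα * W))
        = (α * (γ₂ - 1) / yα) * W := by
      have h1 : γ₂ ≠ 0 := ne_of_lt hγ₂
      have h2 : yα ≠ 0 := ne_of_gt hyα
      field_simp
    rw [hkey]
    apply mul_neg_of_neg_of_pos _ hWpos
    apply div_neg_of_neg_of_pos _ hyα
    exact mul_neg_of_pos_of_neg hα0 (by linarith)
end

section
/- Let 0 < γ₁ < 1, γ₂ < 0, y₁ > 0, μ > r, σ > 0, m > 0, and let y > y₁ satisfy ((1-γ₂)/(γ₁-γ₂))(y/y₁)^{γ₁-1} - ((1-γ₁)/(γ₁-γ₂))(y/y₁)^{γ₂-1} = w/m for some w ∈ (0, m]. Then ((μ-r)/σ²) m ((1-γ₁)(1-γ₂)/(γ₁-γ₂))·[(y/y₁)^{γ₁-1} - (y/y₁)^{γ₂-1}] < ((μ-r)/σ²)(1-γ₁) w. -/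
theorem pistar_lt_piruin_nondrawdown
    (γ₁ γ₂ y₁ μ r σ m w y : ℝ)
    (hγ₁ : 0 < γ₁) (hγ₁' : γ₁ < 1) (hγ₂ : γ₂ < 0) (hy₁ : 0 < y₁)
    (hμ : r < μ) (hσ : 0 < σ) (hm : 0 < m)
    (hw : w ∈ Set.Ioc (0 : ℝ) m) (hy : y₁ < y)
    (hconstraint : ((1 - γ₂) / (γ₁ - γ₂)) * (y / y₁) ^ (γ₁ - 1)
        - ((1 - γ₁) / (γ₁ - γ₂)) * (y / y₁) ^ (γ₂ - 1) = w / m) :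
    ((μ - r) / σ ^ 2) * m * ((1 - γ₁) * (1 - γ₂) / (γ₁ - γ₂))
        * ((y / y₁) ^ (γ₁ - 1) - (y / y₁) ^ (γ₂ - 1))
      < ((μ - r) / σ ^ 2) * (1 - γ₁) * w := by
  set A := (y / y₁) ^ (γ₁ - 1) with hA
  set B := (y / y₁) ^ (γ₂ - 1) with hB
  have hx : (0:ℝ) < y / y₁ := div_pos (hy₁.trans hy) hy₁
  have hBpos : 0 < B := Real.rpow_pos_of_pos hx _
  have hΔ : 0 < γ₁ - γ₂ := by linarith
  have hC : 0 < (μ - r) / σ ^ 2 := div_pos (by linarith) (by positivity)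
  have hw' : w = m * (((1 - γ₂) / (γ₁ - γ₂)) * A - ((1 - γ₁) / (γ₁ - γ₂)) * B) := by
    field_simp at hconstraint
    field_simp
    linarith
  rw [hw']
  have key : (1 - γ₁) * (1 - γ₂) / (γ₁ - γ₂) * (A - B)
      < (1 - γ₁) * (((1 - γ₂) / (γ₁ - γ₂)) * A - ((1 - γ₁) / (γ₁ - γ₂)) * B) := by
    rw [div_mul_eq_mul_div, div_lt_iff₀ hΔ]
    field_simp
    nlinarith [mul_pos hBpos hΔ]
  calc ((μ - r) / σ ^ 2) * m * ((1 - γ₁) * (1 - γ₂) / (γ₁ - γ₂)) * (A - B)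
      = ((μ - r) / σ ^ 2) * m * ((1 - γ₁) * (1 - γ₂) / (γ₁ - γ₂) * (A - B)) := by ring
    _ < ((μ - r) / σ ^ 2) * m * ((1 - γ₁) * (((1 - γ₂) / (γ₁ - γ₂)) * A - ((1 - γ₁) / (γ₁ - γ₂)) * B)) := by
        exact mul_lt_mul_of_pos_left key (by positivity)
    _ = ((μ - r) / σ ^ 2) * (1 - γ₁) * (m * (((1 - γ₂) / (γ₁ - γ₂)) * A - ((1 - γ₁) / (γ₁ - γ₂)) * B)) := by ring
end

section
/- Let 0 < γ₁ < 1 and γ₂ < 0 with constants as in the paper, and let α ∈ (0,1). Define π*(αm-, m) = ((μ-r)/σ²)(1-γ₂)αm (the limit from below) and π*(αm+, m) = ((μ-r)/σ²) m ((1-γ₁)(1-γ₂)/(γ₁-γ₂))[(y_α/y₁)^{γ₁-1} - (y_α/y₁)^{γ₂-1}] where y_α/y₁ = 1/y₁α > 1 solves ((1-γ₂)/(γ₁-γ₂))(y_α/y₁)^{γ₁-1} - ((1-γ₁)/(γ₁-γ₂))(y_α/y₁)^{γ₂-1} = α. Then π*(αm-, m) > π*(αm+, m), i.e., the optimal investment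 jumps down as wealth crosses αm from below. -/
theorem pistar_jumps_down_at_drawdown_boundary
    (γ₁ γ₂ μ r σ m α t : ℝ)
    (hγ₁ : 0 < γ₁) (hγ₁' : γ₁ < 1) (hγ₂ : γ₂ < 0)
    (hμ : r < μ) (hσ : 0 < σ) (hm : 0 < m) (hα : α ∈ Set.Ioo (0 : ℝ) 1)
    (ht : 1 < t)
    (hconstraint : ((1 - γ₂) / (γ₁ - γ₂)) * t ^ (γ₁ - 1)
        - ((1 - γ₁) / (γ₁ - γ₂)) * t ^ (γ₂ - 1) = α) :
    ((μ - r) / σ ^ 2) * m * ((1 - γ₁) * (1 - γ₂) / (γ₁ - γ₂))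
        * (t ^ (γ₁ - 1) - t ^ (γ₂ - 1))
      < ((μ - r) / σ ^ 2) * (1 - γ₂) * (α * m) := by
  have ht0 : (0:ℝ) < t := lt_trans one_pos ht
  have hA : 0 < t ^ (γ₁ - 1) := Real.rpow_pos_of_pos ht0 _
  have hB : 0 < t ^ (γ₂ - 1) := Real.rpow_pos_of_pos ht0 _
  have hd : 0 < γ₁ - γ₂ := by linarith
  have hC : 0 < (μ - r) / σ ^ 2 := div_pos (by linarith) (by positivity)
  subst hconstraint
  generalize t ^ (γ₁ - 1) = A at hA ⊢
  generalize t ^ (γ₂ - 1) = B at hB ⊢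
  have key : (1 - γ₁) * (A - B) < (1 - γ₂) * A - (1 - γ₁) * B := by nlinarith
  have e1 : (μ - r) / σ ^ 2 * m * ((1 - γ₁) * (1 - γ₂) / (γ₁ - γ₂)) * (A - B)
      = ((μ - r) / σ ^ 2 * m * (1 - γ₂) / (γ₁ - γ₂)) * ((1 - γ₁) * (A - B)) := by ring
  have e2 : (μ - r) / σ ^ 2 * (1 - γ₂) * (((1 - γ₂) / (γ₁ - γ₂) * A - (1 - γ₁) / (γ₁ - γ₂) * B) * m)
      = ((μ - r) / σ ^ 2 * m * (1 - γ₂) / (γ₁ - γ₂)) * ((1 - γ₂) * A - (1 - γ₁) * B) := by ring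
  rw [e1, e2]
  exact mul_lt_mul_of_pos_left key
    (div_pos (mul_pos (mul_pos hC hm) (by linarith)) hd)
end
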